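/- arXiv:1604.02471 — 5 statements merged into one kernel-verified Lean document; each statement's English description precedes it below -/
import Mathlib

section
/- Let n ≥ 2, let 𝓛 and 𝓛′ be subgroups of ℤⁿ, and let 0 ≤ p₀ ≤ n−1. Then M_𝓛(k,p) = M_𝓛′(k,p) for all integers k ≥ 1 and all 1 ≤ p ≤ p₀+1 if and only if Σ_{ℓ=0}^{n} ℓʰ N_𝓛(k,ℓ) = Σ_{ℓ=0}^{n} ℓʰ N_𝓛′(k,ℓ) for all k ≥ 0 and all 0 ≤ h ≤ p₀. (This is the combinatorial content of Corollary 2.4: the left-hand condition expresses that the corresponding spherical quotients Γ\S^{2n−1} and Γ′\S^{2n−1} are p-isospectral for all 0 ≤ p ≤ p₀.) -/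
/-!
For fixed `p` and `r`, the weight of `N_𝓛(k - 1 + p - 2r, ℓ)` in `M_𝓛(k, p)` is, for
`0 ≤ ℓ ≤ n`, a polynomial in `ℓ` of degree `≤ p - 1`, and for `r = 0` its coefficient of
`ℓ ^ (p - 1)` is `(-1) ^ (p - 1) / (p - 1)!`. So if the moments of order `≤ p₀` agree, so do
the `M(k, p)` for `p ≤ p₀ + 1`. Conversely, argue by induction on `h`: once the moments of
order `< h` agree, `M(k, h + 1)` is a triangular combination of the differences of `h`-th
moments at `k + h, k + h - 2, …` with nonzero leading coefficient, which settles all indices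
`> h`. For an index `k ≤ h` the difference `N_𝓛(k, ·) - N_𝓛'(k, ·)` is supported on the
`≤ k` values `n - k ≤ ℓ < n` and its moments of order `< k` vanish, so it vanishes
(Vandermonde).
-/

noncomputable section

open Finset PowerSeries

/-- Binomial coefficient `binom b a` with integer arguments,
zero when `a < 0` or `b < a`. -/
def ibinom (b a : ℤ) : ℤ := if a < 0 ∨ b < a then 0 else (b.toNat.choose a.toNat : ℤ)

/-- One-norm `‖μ‖` of an integer vector. -/
def onenorm {n : ℕ} (μ : Fin n → ℤ) : ℕ := ∑ i, (μ i).natAbs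

/-- `Z(μ)`: number of zero coordinates. -/
def zcount {n : ℕ} (μ : Fin n → ℤ) : ℕ := (univ.filter fun i => μ i = 0).card

/-- `N_𝓛(k, ℓ)`. -/
def Ncard {n : ℕ} (L : Set (Fin n → ℤ)) (k ℓ : ℕ) : ℕ :=
  {μ : Fin n → ℤ | μ ∈ L ∧ onenorm μ = k ∧ zcount μ = ℓ}.ncard

/-- `N_𝓛(k)`. -/
def NcardTot {n : ℕ} (L : Set (Fin n → ℤ)) (k : ℕ) : ℕ :=
  {μ : Fin n → ℤ | μ ∈ L ∧ onenorm μ = k}.ncard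

/-- `ϑ_𝓛^{(ℓ)}(z) = Σ_{k≥0} N_𝓛(k,ℓ) z^k`. -/
def thetaL {n : ℕ} (L : Set (Fin n → ℤ)) (ℓ : ℕ) : PowerSeries ℤ :=
  PowerSeries.mk fun k => (Ncard L k ℓ : ℤ)

/-- `ϑ_𝓛(z) = Σ_{k≥0} N_𝓛(k) z^k`. -/
def thetaTot {n : ℕ} (L : Set (Fin n → ℤ)) : PowerSeries ℤ :=
  PowerSeries.mk fun k => (NcardTot L k : ℤ)

/-- `N_𝓛^red(k,ℓ)`, counting elements of `C(q) ∩ 𝓛`. -/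
def NcardRed {n : ℕ} (L : Set (Fin n → ℤ)) (q k ℓ : ℕ) : ℕ :=
  {μ : Fin n → ℤ | (∀ i, |μ i| < (q : ℤ)) ∧ μ ∈ L ∧ onenorm μ = k ∧ zcount μ = ℓ}.ncard

/-- `Φ_𝓛^{(ℓ)}(z) = Σ_{k≥0} N_𝓛^red(k,ℓ) z^k`. -/
def PhiL {n : ℕ} (L : Set (Fin n → ℤ)) (q ℓ : ℕ) : PowerSeries ℤ :=
  PowerSeries.mk fun k => (NcardRed L q k ℓ : ℤ)

/-- `𝓛` is `q`-periodic: `μ ∈ 𝓛 ↔ μ + qν ∈ 𝓛`. -/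
def qPeriodic {n : ℕ} (q : ℕ) (L : Set (Fin n → ℤ)) : Prop :=
  ∀ μ ν : Fin n → ℤ, μ ∈ L ↔ (μ + (q : ℤ) • ν) ∈ L

/-- `M_𝓛(k,p)`. -/
def Mcoef {n : ℕ} (L : Set (Fin n → ℤ)) (k p : ℕ) : ℤ :=
  ∑ ℓ ∈ range (n+1), ∑ r ∈ range ((k-1+p)/2 + 1),
    (Ncard L (k-1+p-2*r) ℓ : ℤ) *
    ∑ j ∈ Icc 1 p, (-1 : ℤ)^(j-1) *
      ∑ t ∈ range ((p-j)/2 + 1), ibinom ((n : ℤ) - p + j + 2*t) t *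
        ∑ β ∈ range (p-j-2*t+1),
          2^(p-j-2*t-β) * ibinom ((n : ℤ) - ℓ) β * ibinom (ℓ : ℤ) ((p-j-2*t-β : ℕ)) *
          ∑ α ∈ range (β+1), ibinom (β : ℤ) α *
            ∑ i ∈ range j, ibinom ((r : ℤ) - i - p + j + α + t + n - 2) ((n : ℤ) - 2)

/-- `Ã_p^{(ℓ)}(z) = z^p A_p^{(ℓ)}(z)`. -/
def Atilde (n p ℓ : ℕ) : PowerSeries ℤ :=
  ∑ j ∈ Icc 1 p, C (R := ℤ) ((-1 : ℤ)^(j-1)) *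
    ∑ t ∈ range ((p-j)/2 + 1), C (R := ℤ) (ibinom ((n : ℤ) - p + j + 2*t) t) *
      ∑ β ∈ range (p-j-2*t+1),
        C (R := ℤ) (2^(p-j-2*t-β) * ibinom ((n : ℤ) - ℓ) β * ibinom (ℓ : ℤ) ((p-j-2*t-β : ℕ))) *
        ∑ α ∈ range (β+1), C (R := ℤ) (ibinom (β : ℤ) α) *
          ∑ i ∈ range j, (X : PowerSeries ℤ)^(2*p - 2*(j+t+α-i))

/-- `Υ_m^{(ℓ)}(z)`; zero when `m < 0`. -/
def Upsilon {n : ℕ} (L : Set (Fin n → ℤ)) (m : ℤ) (ℓ : ℕ) : PowerSeries ℤ :=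
  if m < 0 then 0 else
    ∑ h ∈ range (m.toNat + 1),
      C (R := ℤ) (∑ s ∈ range (h/2 + 1), (Ncard L (h - 2*s) ℓ : ℤ) * ((s + n - 2).choose (n-2) : ℤ)) *
        (X : PowerSeries ℤ)^h

/-- `B̃_{𝓛,p}^{(ℓ)}(z) = z^p B_{𝓛,p}^{(ℓ)}(z)`. -/
def Btilde {n : ℕ} (L : Set (Fin n → ℤ)) (p ℓ : ℕ) : PowerSeries ℤ :=
  ∑ j ∈ Icc 1 p, C (R := ℤ) ((-1 : ℤ)^(j-1)) *
    ∑ t ∈ range ((p-j)/2 + 1), C (R := ℤ) (ibinom ((n : ℤ) - p + j + 2*t) t) *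
      ∑ β ∈ range (p-j-2*t+1),
        C (R := ℤ) (2^(p-j-2*t-β) * ibinom ((n : ℤ) - ℓ) β * ibinom (ℓ : ℤ) ((p-j-2*t-β : ℕ))) *
        ∑ α ∈ range (β+1), C (R := ℤ) (ibinom (β : ℤ) α) *
          ∑ i ∈ range j,
            (X : PowerSeries ℤ)^(2*p - 2*(j+t+α-i)) *
              Upsilon L (2*((j : ℤ) + t + α - i) - p - 1) ℓ

/-- `C_{p,g}^{(ℓ)}`. -/
def Cpg (n p g ℓ : ℕ) : ℤ :=
  ∑ j ∈ Icc 1 p, (-1 : ℤ)^(j-1) *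
    ∑ t ∈ range ((p-j)/2 + 1), ibinom ((n : ℤ) - p + j + 2*t) t *
      ∑ β ∈ range (p-j-2*t+1),
        2^(p-j-2*t-β) * ibinom ((n : ℤ) - ℓ) β * ibinom (ℓ : ℤ) ((p-j-2*t-β : ℕ)) *
        ∑ i ∈ range j, ibinom (β : ℤ) ((p : ℤ) + i - j - t - g)

namespace Polynomial

theorem sum_eval_mul_eq_coeff_mul {R ι : Type*} [CommRing R] {s : Finset ι} {x f : ι → R}
    {P : R[X]} {h : ℕ} (hP : P.natDegree ≤ h) (hf : ∀ j < h, ∑ i ∈ s, x i ^ j * f i = 0) :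
    ∑ i ∈ s, P.eval (x i) * f i = P.coeff h * ∑ i ∈ s, x i ^ h * f i := by
  simp only [eval_eq_sum_range' (Nat.lt_succ_of_le hP), Finset.sum_mul, mul_assoc]
  rw [Finset.sum_comm, Finset.sum_range_succ]
  simp only [← Finset.mul_sum]
  rw [Finset.sum_eq_zero fun j hj => by rw [hf j (mem_range.mp hj), mul_zero], zero_add]

theorem eq_zero_of_sum_pow_mul_eq_zero {R ι : Type*} [Field R] [DecidableEq ι] {s t : Finset ι}
    {x f : ι → R} (hx : Set.InjOn x t) (hft : ∀ i ∈ s, i ∉ t → f i = 0)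
    (hf : ∀ j < t.card, ∑ i ∈ s, x i ^ j * f i = 0) : ∀ i ∈ s, f i = 0 := by
  intro i hi
  by_cases hit : i ∈ t
  swap
  · exact hft i hi hit
  have hdeg : (Lagrange.basis t x i).natDegree ≤ t.card - 1 :=
    (natDegree_eq_of_degree_eq_some (Lagrange.degree_basis hx hit)).le
  have hcard : t.card - 1 < t.card := Nat.sub_lt (Finset.card_pos.mpr ⟨i, hit⟩) one_pos
  have key := sum_eval_mul_eq_coeff_mul (s := s) (x := x) (f := f) hdeg
    fun j hj => hf j (by omega)
  rw [hf _ hcard, mul_zero, Finset.sum_eq_single_of_mem i hi, Lagrange.eval_basis_self hx hit,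
    one_mul] at key
  · exact key
  intro b hb hbi
  by_cases hbt : b ∈ t
  · rw [Lagrange.eval_basis_of_ne hbi.symm hbt, zero_mul]
  · rw [hft b hb hbt, mul_zero]

def choosePoly (a : ℕ) (q : ℚ[X]) : ℚ[X] :=
  C (a.factorial : ℚ)⁻¹ * (descPochhammer ℚ a).comp q

theorem eval_choosePoly {a m : ℕ} {q : ℚ[X]} {x : ℚ} (hq : q.eval x = m) :
    (choosePoly a q).eval x = m.choose a := by
  rw [choosePoly, eval_mul, eval_C, eval_comp, hq, descPochhammer_eval_eq_descFactorial,
    Nat.descFactorial_eq_factorial_mul_choose, Nat.cast_mul, inv_mul_cancel_left₀]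
  exact_mod_cast a.factorial_ne_zero

@[simp]
theorem choosePoly_zero (q : ℚ[X]) : choosePoly 0 q = 1 := by
  simp [choosePoly]

theorem natDegree_choosePoly_le {a : ℕ} {q : ℚ[X]} (hq : q.natDegree ≤ 1) :
    (choosePoly a q).natDegree ≤ a :=
  (natDegree_C_mul_le _ _).trans <| natDegree_comp_le.trans <| by
    rw [descPochhammer_natDegree]; simpa using Nat.mul_le_mul_left a hq

theorem coeff_choosePoly_sub_X (a : ℕ) (c : ℚ) :
    (choosePoly a (C c - X)).coeff a = (-1) ^ a / a.factorial := by
  have hq : (C c - X).natDegree = 1 := by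
    rw [natDegree_sub_eq_right_of_natDegree_lt] <;> simp
  have hdeg : ((descPochhammer ℚ a).comp (C c - X)).natDegree = a := by
    rw [natDegree_comp, hq, descPochhammer_natDegree, mul_one]
  have hlead : ((descPochhammer ℚ a).comp (C c - X)).coeff a = (-1) ^ a := by
    have htop := coeff_natDegree (p := (descPochhammer ℚ a).comp (C c - X))
    rw [hdeg] at htop
    rw [htop, leadingCoeff_comp (by rw [hq]; simp),
      (monic_descPochhammer ℚ a).leadingCoeff, descPochhammer_natDegree, leadingCoeff, hq]
    simp
  rw [choosePoly, coeff_C_mul, hlead, div_eq_inv_mul]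

end Polynomial

section Counting

variable {n : ℕ}

theorem onenorm_eq_zero_iff {μ : Fin n → ℤ} : onenorm μ = 0 ↔ μ = 0 := by
  simp [onenorm, Finset.sum_eq_zero_iff, funext_iff]

theorem zcount_zero : zcount (0 : Fin n → ℤ) = n := by
  simp [zcount]

theorem zcount_lt_of_ne_zero {μ : Fin n → ℤ} (hμ : μ ≠ 0) : zcount μ < n := by
  obtain ⟨i, hi⟩ := Function.ne_iff.mp hμ
  simpa [zcount] using Finset.card_lt_card (Finset.filter_ssubset.mpr ⟨i, mem_univ i, hi⟩)

theorem le_zcount_add_onenorm (μ : Fin n → ℤ) : n ≤ zcount μ + onenorm μ :=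
  calc n = ∑ _i : Fin n, 1 := by simp
    _ ≤ ∑ i, ((if μ i = 0 then 1 else 0) + (μ i).natAbs) := Finset.sum_le_sum fun i _ => by
        split_ifs with hi
        · exact Nat.le_add_right 1 _
        · exact (Int.natAbs_pos.mpr hi).trans_eq (zero_add _).symm
    _ = zcount μ + onenorm μ := by
        rw [Finset.sum_add_distrib, zcount, Finset.card_filter, onenorm]

theorem Ncard_zero_left {L : Set (Fin n → ℤ)} (h0 : 0 ∈ L) (ℓ : ℕ) :
    Ncard L 0 ℓ = if ℓ = n then 1 else 0 := by
  have hset : {μ : Fin n → ℤ | μ ∈ L ∧ onenorm μ = 0 ∧ zcount μ = ℓ} =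
      if ℓ = n then {0} else ∅ := by
    ext μ
    simp only [Set.mem_ofPred_eq, onenorm_eq_zero_iff]
    constructor
    · rintro ⟨-, rfl, rfl⟩
      simp [zcount_zero]
    · split_ifs with hℓ
      · rintro rfl
        exact ⟨h0, rfl, hℓ ▸ zcount_zero⟩
      · simp
  rw [Ncard, hset]
  split_ifs <;> simp

theorem Ncard_eq_zero_of_notMem_Ico {L : Set (Fin n → ℤ)} {k ℓ : ℕ} (hk : 0 < k)
    (hℓ : ℓ ∉ Ico (n - k) n) : Ncard L k ℓ = 0 := by
  rw [Ncard, ← Set.ncard_empty (Fin n → ℤ)]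
  congr
  refine Set.eq_empty_iff_forall_notMem.mpr ?_
  rintro μ ⟨-, rfl, rfl⟩
  refine hℓ (mem_Ico.mpr ⟨?_, zcount_lt_of_ne_zero ?_⟩)
  · have := le_zcount_add_onenorm μ
    omega
  · rintro rfl
    exact hk.ne' (onenorm_eq_zero_iff.mpr rfl)

theorem Ncard_sub_eq_zero_of_notMem_Ico {L L' : Set (Fin n → ℤ)} (h0 : 0 ∈ L) (h0' : 0 ∈ L')
    {k ℓ : ℕ} (hℓ : ℓ ∉ Ico (n - k) n) : (Ncard L k ℓ : ℚ) - Ncard L' k ℓ = 0 := by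
  rcases Nat.eq_zero_or_pos k with rfl | hk
  · rw [Ncard_zero_left h0, Ncard_zero_left h0', sub_self]
  · rw [Ncard_eq_zero_of_notMem_Ico hk hℓ, Ncard_eq_zero_of_notMem_Ico hk hℓ, sub_self]

end Counting

theorem ibinom_natCast (b a : ℕ) : ibinom b a = b.choose a := by
  rw [ibinom]
  split_ifs with h
  · rw [Nat.choose_eq_zero_of_lt (by omega), Nat.cast_zero]
  · simp

theorem ibinom_of_lt {b a : ℤ} (h : b < a) : ibinom b a = 0 :=
  if_pos (Or.inr h)

theorem ibinom_zero_right {b : ℤ} (hb : 0 ≤ b) : ibinom b 0 = 1 := by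
  lift b to ℕ using hb
  simpa using ibinom_natCast b 0

theorem ibinom_self {b : ℤ} (hb : 0 ≤ b) : ibinom b b = 1 := by
  lift b to ℕ using hb
  simpa using ibinom_natCast b b

section Weights

open Polynomial

def McoefConst (n p r j t β : ℕ) : ℤ :=
  ∑ α ∈ range (β+1), ibinom (β : ℤ) α *
    ∑ i ∈ range j, ibinom ((r : ℤ) - i - p + j + α + t + n - 2) ((n : ℤ) - 2)

/-- The weight of `N_𝓛(k - 1 + p - 2r, ℓ)` in `M_𝓛(k, p)`. -/
def Mweight (n p r ℓ : ℕ) : ℤ :=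
  ∑ j ∈ Icc 1 p, (-1 : ℤ)^(j-1) *
    ∑ t ∈ range ((p-j)/2 + 1), ibinom ((n : ℤ) - p + j + 2*t) t *
      ∑ β ∈ range (p-j-2*t+1),
        2^(p-j-2*t-β) * ibinom ((n : ℤ) - ℓ) β * ibinom (ℓ : ℤ) ((p-j-2*t-β : ℕ)) *
          McoefConst n p r j t β

def MpolyTerm (n p r j t β : ℕ) : ℚ[X] :=
  Polynomial.C ((2 : ℚ) ^ (p-j-2*t-β)) * choosePoly β (Polynomial.C (n : ℚ) - Polynomial.X) *
    choosePoly (p-j-2*t-β) Polynomial.X * Polynomial.C (McoefConst n p r j t β : ℚ)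

def Mpoly (n p r : ℕ) : ℚ[X] :=
  ∑ j ∈ Icc 1 p, Polynomial.C ((-1 : ℚ)^(j-1)) *
    ∑ t ∈ range ((p-j)/2 + 1), Polynomial.C (ibinom ((n : ℤ) - p + j + 2*t) t : ℚ) *
      ∑ β ∈ range (p-j-2*t+1), MpolyTerm n p r j t β

variable {n : ℕ}

theorem eval_Mpoly {p r ℓ : ℕ} (hℓ : ℓ ≤ n) :
    (Mpoly n p r).eval (ℓ : ℚ) = Mweight n p r ℓ := by
  have hsub (β : ℕ) : (choosePoly β (Polynomial.C (n : ℚ) - Polynomial.X)).eval (ℓ : ℚ) =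
      ibinom ((n : ℤ) - ℓ) β := by
    rw [eval_choosePoly (m := n - ℓ) (by simp [Nat.cast_sub hℓ]), ← Nat.cast_sub hℓ,
      ibinom_natCast, Int.cast_natCast]
  have hX (m : ℕ) : (choosePoly m Polynomial.X).eval (ℓ : ℚ) = ibinom ℓ m := by
    rw [eval_choosePoly eval_X, ibinom_natCast, Int.cast_natCast]
  simp only [Mpoly, MpolyTerm, Mweight, eval_finsetSum, eval_mul, eval_C, hsub, hX]
  push_cast
  simp only [mul_assoc]

theorem natDegree_MpolyTerm_le {p r j t β : ℕ} (hβ : β ≤ p - j - 2*t) :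
    (MpolyTerm n p r j t β).natDegree ≤ p - j - 2*t := by
  have hq : (Polynomial.C (n : ℚ) - Polynomial.X).natDegree ≤ 1 :=
    (natDegree_sub_le _ _).trans (by simp)
  refine (natDegree_mul_C_le _ _).trans <| natDegree_mul_le.trans ?_
  have h1 := natDegree_C_mul_le (R := ℚ) ((2 : ℚ) ^ (p-j-2*t-β))
    (choosePoly β (Polynomial.C (n : ℚ) - Polynomial.X))
  have h2 := natDegree_choosePoly_le (a := p - j - 2*t - β) natDegree_X_le
  have h3 := natDegree_choosePoly_le (a := β) hq
  omega

theorem natDegree_Mpoly_le (p r : ℕ) : (Mpoly n p r).natDegree ≤ p - 1 := by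
  refine natDegree_sum_le_of_forall_le _ _ fun j hj => (natDegree_C_mul_le _ _).trans ?_
  refine natDegree_sum_le_of_forall_le _ _ fun t _ => (natDegree_C_mul_le _ _).trans ?_
  refine natDegree_sum_le_of_forall_le _ _ fun β hβ => ?_
  have := (mem_Icc.mp hj).1
  exact (natDegree_MpolyTerm_le (Nat.lt_succ_iff.mp (mem_range.mp hβ))).trans (by omega)

theorem McoefConst_eq_sum (h β : ℕ) :
    McoefConst n (h+1) 0 1 0 β =
      ∑ α ∈ range (β+1), ibinom β α * ibinom ((α : ℤ) - h + n - 2) ((n : ℤ) - 2) := by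
  refine sum_congr rfl fun α _ => ?_
  rw [sum_range_one]
  congr 2
  push_cast
  ring

theorem McoefConst_eq_zero_of_lt {h β : ℕ} (hβ : β < h) : McoefConst n (h+1) 0 1 0 β = 0 := by
  rw [McoefConst_eq_sum]
  refine sum_eq_zero fun α hα => ?_
  have := mem_range.mp hα
  rw [ibinom_of_lt (a := (n : ℤ) - 2) (by omega), mul_zero]

theorem McoefConst_self (hn : 2 ≤ n) (h : ℕ) : McoefConst n (h+1) 0 1 0 h = 1 := by
  rw [McoefConst_eq_sum, sum_range_succ, sum_eq_zero fun α hα => by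
    rw [ibinom_of_lt (a := (n : ℤ) - 2) (by have := mem_range.mp hα; omega), mul_zero]]
  rw [zero_add, sub_self, zero_add, ibinom_self (by omega), ibinom_self (by omega), one_mul]

theorem coeff_MpolyTerm_self (hn : 2 ≤ n) (h : ℕ) :
    (MpolyTerm n (h+1) 0 1 0 h).coeff h = (-1) ^ h / h.factorial := by
  simp only [MpolyTerm, McoefConst_self hn, Nat.add_sub_cancel, mul_zero, Nat.sub_zero,
    Nat.sub_self, pow_zero, choosePoly_zero, Int.cast_one, map_one, one_mul, mul_one,
    coeff_choosePoly_sub_X]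

theorem coeff_MpolyTerm_eq_zero_of_lt {h β : ℕ} (hβ : β < h) :
    (MpolyTerm n (h+1) 0 1 0 β).coeff h = 0 := by
  simp [MpolyTerm, McoefConst_eq_zero_of_lt hβ]

theorem coeff_Mpoly_zero (hn : 2 ≤ n) {h : ℕ} (hh : h < n) :
    (Mpoly n (h+1) 0).coeff h = (-1) ^ h / h.factorial := by
  have hsmall {j t β : ℕ} (hj : j ∈ Icc 1 (h + 1)) (ht : t ∈ range ((h + 1 - j) / 2 + 1))
      (hβ : β ∈ range (h + 1 - j - 2*t + 1)) (hjt : j ≠ 1 ∨ t ≠ 0) :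
      (MpolyTerm n (h+1) 0 j t β).coeff h = 0 := by
    have := mem_Icc.mp hj
    have := mem_range.mp ht
    exact coeff_eq_zero_of_natDegree_lt <|
      (natDegree_MpolyTerm_le (Nat.lt_succ_iff.mp (mem_range.mp hβ))).trans_lt (by omega)
  simp only [Mpoly, finsetSum_coeff, Polynomial.coeff_C_mul]
  rw [sum_eq_single_of_mem 1 (by simp) ?_, sum_eq_single_of_mem 0 (by simp) ?_,
    sum_eq_single_of_mem h (by simp) ?_]
  · simp [coeff_MpolyTerm_self hn, ibinom_zero_right, show (n : ℤ) - (h + 1) + 1 = n - h by ring,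
      hh.le]
  · intro β hβ hβh
    exact coeff_MpolyTerm_eq_zero_of_lt (lt_of_le_of_ne (by simpa [Nat.lt_succ_iff] using hβ) hβh)
  · intro t ht ht0
    rw [sum_eq_zero fun β hβ => hsmall (by simp) ht hβ (Or.inr ht0), mul_zero]
  · intro j hj hj1
    rw [sum_eq_zero fun t ht => by rw [sum_eq_zero fun β hβ => hsmall hj ht hβ (Or.inl hj1),
      mul_zero], mul_zero]

end Weights

section Moments

open Polynomial

variable {n : ℕ}

def moment (n : ℕ) (d : ℕ → ℕ → ℚ) (h k : ℕ) : ℚ :=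
  ∑ ℓ ∈ range (n+1), (ℓ : ℚ) ^ h * d k ℓ

/-- `M(k, p)` for an arbitrary array `d k ℓ` in place of `N_𝓛(k, ℓ)`. -/
def Mform (n : ℕ) (d : ℕ → ℕ → ℚ) (k p : ℕ) : ℚ :=
  ∑ r ∈ range ((k-1+p)/2 + 1), ∑ ℓ ∈ range (n+1),
    (Mpoly n p r).eval (ℓ : ℚ) * d (k-1+p-2*r) ℓ

theorem moment_sub (a b : ℕ → ℕ → ℚ) (h k : ℕ) :
    moment n (fun k ℓ => a k ℓ - b k ℓ) h k = moment n a h k - moment n b h k := by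
  simp only [moment, mul_sub, sum_sub_distrib]

theorem Mform_sub (a b : ℕ → ℕ → ℚ) (k p : ℕ) :
    Mform n (fun k ℓ => a k ℓ - b k ℓ) k p = Mform n a k p - Mform n b k p := by
  simp only [Mform, mul_sub, sum_sub_distrib]

theorem cast_Mcoef (L : Set (Fin n → ℤ)) (k p : ℕ) :
    (Mcoef L k p : ℚ) = Mform n (fun k ℓ => (Ncard L k ℓ : ℚ)) k p := by
  rw [Mform, sum_comm]
  change ((∑ ℓ ∈ range (n+1), ∑ r ∈ range ((k-1+p)/2 + 1),
    (Ncard L (k-1+p-2*r) ℓ : ℤ) * Mweight n p r ℓ : ℤ) : ℚ) = _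
  push_cast
  refine sum_congr rfl fun ℓ hℓ => sum_congr rfl fun r _ => ?_
  rw [eval_Mpoly (Nat.lt_succ_iff.mp (mem_range.mp hℓ)), mul_comm]

theorem Mcoef_eq_iff_Mform_sub_eq_zero (L L' : Set (Fin n → ℤ)) (k p : ℕ) :
    Mcoef L k p = Mcoef L' k p ↔
      Mform n (fun k ℓ => (Ncard L k ℓ : ℚ) - Ncard L' k ℓ) k p = 0 := by
  rw [Mform_sub, ← cast_Mcoef, ← cast_Mcoef, sub_eq_zero, Int.cast_inj]

theorem sum_pow_mul_Ncard_eq_iff_moment_sub_eq_zero (L L' : Set (Fin n → ℤ)) (k h : ℕ) :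
    ∑ ℓ ∈ range (n+1), (ℓ : ℤ) ^ h * (Ncard L k ℓ : ℤ) =
        ∑ ℓ ∈ range (n+1), (ℓ : ℤ) ^ h * (Ncard L' k ℓ : ℤ) ↔
      moment n (fun k ℓ => (Ncard L k ℓ : ℚ) - Ncard L' k ℓ) h k = 0 := by
  rw [moment_sub, sub_eq_zero, ← Int.cast_inj (α := ℚ)]
  push_cast
  rfl

variable {d : ℕ → ℕ → ℚ}

theorem Mform_eq_sum_coeff_mul_moment {p : ℕ} (hlow : ∀ j < p - 1, ∀ k, moment n d j k = 0)
    (k : ℕ) :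
    Mform n d k p = ∑ r ∈ range ((k-1+p)/2 + 1),
      (Mpoly n p r).coeff (p - 1) * moment n d (p - 1) (k-1+p-2*r) :=
  sum_congr rfl fun r _ =>
    sum_eval_mul_eq_coeff_mul (natDegree_Mpoly_le p r) fun j hj => hlow j hj _

theorem eq_zero_of_moment_eq_zero {h k : ℕ} (hk : k ≤ h)
    (hsupp : ∀ ℓ ∈ range (n+1), ℓ ∉ Ico (n - k) n → d k ℓ = 0)
    (hlow : ∀ j < h, moment n d j k = 0) : ∀ ℓ ∈ range (n+1), d k ℓ = 0 :=
  eq_zero_of_sum_pow_mul_eq_zero Nat.cast_injective.injOn hsupp fun j hj =>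
    hlow j (by rw [Nat.card_Ico] at hj; omega)

theorem moment_eq_zero_of_Mform_eq_zero (hn : 2 ≤ n) {h : ℕ} (hh : h < n)
    (hsupp : ∀ k, ∀ ℓ ∈ range (n+1), ℓ ∉ Ico (n - k) n → d k ℓ = 0)
    (hlow : ∀ j < h, ∀ k, moment n d j k = 0) (hM : ∀ k, 1 ≤ k → Mform n d k (h+1) = 0)
    (K : ℕ) : moment n d h K = 0 := by
  induction K using Nat.strong_induction_on with
  | _ K ih =>
  rcases le_or_gt K h with hKh | hKh
  · rw [moment, sum_eq_zero fun ℓ hℓ => by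
      rw [eq_zero_of_moment_eq_zero hKh (hsupp K) (fun j hj => hlow j hj K) ℓ hℓ, mul_zero]]
  have hKM := hM (K - h) (by omega)
  rw [Mform_eq_sum_coeff_mul_moment (fun j hj => hlow j (by omega)), Nat.add_sub_cancel,
    show K - h - 1 + (h+1) = K by omega, sum_eq_single_of_mem 0 (by simp)
      fun r hr hr0 => by rw [ih _ (by omega), mul_zero], coeff_Mpoly_zero hn hh] at hKM
  simpa [h.factorial_ne_zero] using hKM

theorem Mform_eq_zero_iff_moment_eq_zero (hn : 2 ≤ n) {p₀ : ℕ} (hp₀ : p₀ < n)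
    (hsupp : ∀ k, ∀ ℓ ∈ range (n+1), ℓ ∉ Ico (n - k) n → d k ℓ = 0) :
    (∀ k p, 1 ≤ k → 1 ≤ p → p ≤ p₀ + 1 → Mform n d k p = 0) ↔
      ∀ k h, h ≤ p₀ → moment n d h k = 0 := by
  constructor
  · intro hM k h hh
    induction h using Nat.strong_induction_on generalizing k with
    | _ h ih =>
      exact moment_eq_zero_of_Mform_eq_zero hn (by omega) hsupp
        (fun j hj k => ih j hj k (by omega)) (fun k hk => hM k (h+1) hk (by omega) (by omega)) k
  · intro hmom k p _ _ hp
    rw [Mform_eq_sum_coeff_mul_moment fun j _ k => hmom k j (by omega)]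
    exact sum_eq_zero fun r _ => by rw [hmom _ _ (by omega), mul_zero]

end Moments

/-- Corollary 2.4: the `p`-spectra agree for all `1 ≤ p ≤ p₀+1`
iff the moments of order `h ≤ p₀` of the counting functions agree. -/
theorem stmt1 {n : ℕ} (hn : 2 ≤ n) (L L' : AddSubgroup (Fin n → ℤ)) {p₀ : ℕ}
    (hp₀ : p₀ ≤ n - 1) :
    (∀ k p : ℕ, 1 ≤ k → 1 ≤ p → p ≤ p₀ + 1 →
        Mcoef (L : Set (Fin n → ℤ)) k p = Mcoef (L' : Set (Fin n → ℤ)) k p) ↔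
      (∀ k h : ℕ, h ≤ p₀ →
        ∑ ℓ ∈ range (n+1), (ℓ : ℤ)^h * (Ncard (L : Set (Fin n → ℤ)) k ℓ : ℤ) =
          ∑ ℓ ∈ range (n+1), (ℓ : ℤ)^h * (Ncard (L' : Set (Fin n → ℤ)) k ℓ : ℤ)) := by
  simp only [Mcoef_eq_iff_Mform_sub_eq_zero, sum_pow_mul_Ncard_eq_iff_moment_sub_eq_zero]
  exact Mform_eq_zero_iff_moment_eq_zero hn (by omega) fun k ℓ _ hℓ =>
    Ncard_sub_eq_zero_of_notMem_Ico L.zero_mem L'.zero_mem hℓ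
end
end

section
/- Let n ≥ 1, let q be a positive integer, and let 𝓛 ⊆ ℤⁿ be a q-periodic subset. Then for every 0 ≤ ℓ ≤ n the following identity holds in ℤ[[z]]: (1−z^q)^{n−ℓ} · ϑ_𝓛^{(ℓ)}(z) = Σ_{s=0}^{n−ℓ} 2ˢ binom(ℓ+s, s) z^{sq} Φ_𝓛^{(ℓ+s)}(z). (This is Theorem 2.5, stated for the congruence lattice 𝓛 = 𝓛_Γ of a finite subgroup Γ of the maximal torus with q(Γ) = q, which is a q-periodic subgroup of ℤⁿ.) -/
noncomputable section

open Finset PowerSeries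

/-!
Record the zero count by a second variable `y`, i.e. work with
`Θ_𝓛(y) = ∑_ℓ ϑ_𝓛^{(ℓ)}(z) yˡ`. Slicing `𝓛 ⊆ ℤⁿ⁺¹` along the first coordinate gives
`Θ_𝓛 = y Θ_{𝓛₀} + ∑_{a ≥ 1} zᵃ (Θ_{𝓛_a} + Θ_{𝓛_{-a}})`. For `q`-periodic `𝓛` the slices
repeat with period `q`, so multiplying by `1 - z^q` cuts the sum down to `a ≤ q`; for `C(q) ∩ 𝓛`
the sum stops at `a < q` anyway. Since the slices at `±q` both equal the slice at `0`, induction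
on `n` gives `(1 - z^q)ⁿ Θ_𝓛(y) = Φ_𝓛((1 - z^q) y + 2 z^q)`, with `Φ_𝓛` the generating polynomial
of `C(q) ∩ 𝓛`. Comparing coefficients of `yˡ` and cancelling `(1 - z^q)ˡ` gives the theorem.
-/

namespace LatticeTheta

variable {n : ℕ}

lemma ncard_eq_sum_ncard_fiber {α β : Type*} [DecidableEq β] {s : Set α} (hs : s.Finite)
    {f : α → β} {t : Finset β} (hf : ∀ x ∈ s, f x ∈ t) :
    s.ncard = ∑ b ∈ t, {x | x ∈ s ∧ f x = b}.ncard := by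
  rw [Set.ncard_eq_toFinset_card s hs,
    card_eq_sum_card_fiberwise fun x hx => hf x (by simpa using hx)]
  refine sum_congr rfl fun b _ => ?_
  rw [← Set.ncard_coe_finset]
  exact congrArg Set.ncard (Set.ext fun x => by simp)

lemma sum_Icc_neg_eq_add_sum_Ioc {M : Type*} [AddCommMonoid M] (g : ℤ → M) (k : ℕ) :
    ∑ b ∈ Icc (-(k : ℤ)) k, g b = g 0 + ∑ a ∈ Ioc 0 k, (g a + g (-a)) := by
  induction k with
  | zero => simp
  | succ k ih =>
    have hIcc : Icc (-((k + 1 : ℕ) : ℤ)) (k + 1 : ℕ) =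
        insert (-((k + 1 : ℕ) : ℤ)) (insert ((k + 1 : ℕ) : ℤ) (Icc (-(k : ℤ)) k)) := by
      ext b; simp only [mem_Icc, mem_insert]; omega
    rw [hIcc, sum_insert (by simp; omega), sum_insert (by simp), ih,
      sum_Ioc_succ_top (Nat.zero_le k)]
    abel

lemma coeff_X_mul_eq_ite {R : Type*} [Semiring R] (p : Polynomial R) (ℓ : ℕ) :
    (Polynomial.X * p).coeff ℓ = if ℓ = 0 then 0 else p.coeff (ℓ - 1) := by
  rcases ℓ with _ | ℓ
  · simp
  · simp [Polynomial.coeff_X_mul]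

section SumXPow

variable {R : Type*} [Semiring R]

/-- The formal sum `∑_{a ≥ 1} X^a * F a`. -/
def sumXPowMul (F : ℕ → PowerSeries R) : PowerSeries R :=
  mk fun k => ∑ a ∈ Ioc 0 k, coeff (k - a) (F a)

lemma coeff_sum_X_pow_mul (F : ℕ → PowerSeries R) {k N : ℕ} (hkN : k ≤ N) :
    coeff k (∑ a ∈ Ioc 0 N, X ^ a * F a) = coeff k (sumXPowMul F) := by
  rw [sumXPowMul, coeff_mk, map_sum]
  simp only [coeff_X_pow_mul']
  rw [← sum_filter]
  congr 1
  ext a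
  simp only [mem_filter, mem_Ioc]
  omega

lemma sum_Ioc_add_X_pow_mul {q : ℕ} {F : ℕ → PowerSeries R} (hF : Function.Periodic F q)
    (N : ℕ) : ∑ a ∈ Ioc 0 (q + N), X ^ a * F a =
      ∑ a ∈ Ioc 0 q, X ^ a * F a + X ^ q * ∑ a ∈ Ioc 0 N, X ^ a * F a := by
  have hIoc : Ioc q (q + N) = (Ioc 0 N).map (addLeftEmbedding q) := by
    rw [map_add_left_Ioc, add_zero]
  rw [← sum_Ioc_consecutive _ (Nat.zero_le q) (Nat.le_add_right q N), hIoc, sum_map, mul_sum]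
  refine congrArg _ (sum_congr rfl fun a _ => ?_)
  rw [addLeftEmbedding_apply, pow_add, mul_assoc, add_comm q a, hF]

lemma one_sub_X_pow_mul_sumXPowMul {R : Type*} [Ring R] {q : ℕ} {F : ℕ → PowerSeries R}
    (hF : Function.Periodic F q) :
    (1 - X ^ q) * sumXPowMul F = ∑ a ∈ Ioc 0 q, X ^ a * F a := by
  ext k
  have hk := coeff_sum_X_pow_mul F (Nat.le_add_left k q)
  rw [sum_Ioc_add_X_pow_mul hF, map_add] at hk
  rw [sub_mul, one_mul, map_sub, ← hk, coeff_X_pow_mul', coeff_X_pow_mul']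
  split_ifs
  · rw [coeff_sum_X_pow_mul F (Nat.sub_le k q)]
    abel
  · abel

lemma sumXPowMul_eq_sum_of_eq_zero {N : ℕ} {F : ℕ → PowerSeries R}
    (hF : ∀ a, N < a → F a = 0) :
    sumXPowMul F = ∑ a ∈ Ioc 0 N, X ^ a * F a := by
  ext k
  rw [← coeff_sum_X_pow_mul F (le_max_left k N)]
  refine congrArg _ (sum_subset (Ioc_subset_Ioc_right (le_max_right k N)) fun a haM ha => ?_).symm
  rw [hF a (by simp only [mem_Ioc] at haM ha; omega), mul_zero]

end SumXPow

lemma cons_add_smul_cons {R M : Type*} [Add M] [SMul R M] (a b : M) (c : R) (μ ν : Fin n → M) :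
    (Fin.cons a μ + c • Fin.cons b ν : Fin (n + 1) → M) =
      Fin.cons (a + c • b) (μ + c • ν) := by
  ext i
  cases i using Fin.cases <;> simp

lemma onenorm_cons (a : ℤ) (ν : Fin n → ℤ) :
    onenorm (Fin.cons a ν : Fin (n + 1) → ℤ) = a.natAbs + onenorm ν := by
  simp [onenorm, Fin.sum_univ_succ]

lemma zcount_cons (a : ℤ) (ν : Fin n → ℤ) :
    zcount (Fin.cons a ν : Fin (n + 1) → ℤ) = (if a = 0 then 1 else 0) + zcount ν := by
  simp only [zcount, card_filter, Fin.sum_univ_succ, Fin.cons_zero, Fin.cons_succ]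

lemma zcount_le (μ : Fin n → ℤ) : zcount μ ≤ n :=
  (card_filter_le _ _).trans_eq (card_fin n)

lemma natAbs_le_onenorm (μ : Fin n → ℤ) (i : Fin n) : (μ i).natAbs ≤ onenorm μ :=
  single_le_sum (f := fun j => (μ j).natAbs) (fun _ _ => Nat.zero_le _) (mem_univ i)

lemma finite_setOf_onenorm_eq (k : ℕ) : {μ : Fin n → ℤ | onenorm μ = k}.Finite := by
  refine (Set.finite_Icc (fun _ => -(k : ℤ)) fun _ => (k : ℤ)).subset fun μ hμ => ?_
  have := natAbs_le_onenorm μ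
  change onenorm μ = k at hμ
  exact ⟨fun i => show -(k : ℤ) ≤ μ i by have := this i; omega,
    fun i => show μ i ≤ k by have := this i; omega⟩

lemma Ncard_eq_zero_of_lt (L : Set (Fin n → ℤ)) (k : ℕ) {ℓ : ℕ} (hℓ : n < ℓ) :
    Ncard L k ℓ = 0 := by
  refine (Set.ncard_eq_zero (finite_setOf_onenorm_eq k |>.subset fun μ hμ => hμ.2.1)).2 ?_
  refine Set.eq_empty_of_forall_notMem fun μ hμ => ?_
  have := zcount_le μ
  exact absurd hμ.2.2 (by omega)

lemma Ncard_empty (k ℓ : ℕ) : Ncard (∅ : Set (Fin n → ℤ)) k ℓ = 0 := by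
  simp [Ncard]

lemma ncard_setOf_mem_and_apply_zero_eq {M : Type*} (s : Set (Fin (n + 1) → M)) (a : M) :
    {μ | μ ∈ s ∧ μ 0 = a}.ncard = {ν : Fin n → M | Fin.cons a ν ∈ s}.ncard := by
  rw [← Set.ncard_image_of_injective {ν : Fin n → M | Fin.cons a ν ∈ s}
    (Fin.cons_right_injective (α := fun _ => M) a)]
  refine congrArg Set.ncard (Set.ext fun μ => ⟨?_, ?_⟩)
  · rintro ⟨hμ, rfl⟩
    exact ⟨Fin.tail μ, by simpa using hμ, Fin.cons_self_tail μ⟩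
  · rintro ⟨ν, hν, rfl⟩
    exact ⟨hν, Fin.cons_zero _ _⟩

def slice (L : Set (Fin (n + 1) → ℤ)) (a : ℤ) : Set (Fin n → ℤ) :=
  {ν | Fin.cons a ν ∈ L}

lemma Ncard_eq_sum_slice (L : Set (Fin (n + 1) → ℤ)) (k ℓ : ℕ) :
    Ncard L k ℓ = (if ℓ = 0 then 0 else Ncard (slice L 0) k (ℓ - 1)) +
      ∑ a ∈ Ioc 0 k, (Ncard (slice L a) (k - a) ℓ + Ncard (slice L (-a)) (k - a) ℓ) := by
  have hfin := (finite_setOf_onenorm_eq (n := n + 1) k).subset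
    (t := {μ | μ ∈ L ∧ onenorm μ = k ∧ zcount μ = ℓ}) fun μ hμ => hμ.2.1
  rw [Ncard, ncard_eq_sum_ncard_fiber hfin (f := fun μ => μ 0) (t := Icc (-(k : ℤ)) k)
    fun μ hμ => by
      have := natAbs_le_onenorm μ 0
      rw [hμ.2.1] at this
      simp only [mem_Icc]
      omega,
    sum_Icc_neg_eq_add_sum_Ioc]
  simp only [ncard_setOf_mem_and_apply_zero_eq]
  simp only [Set.mem_ofPred_eq, onenorm_cons, zcount_cons]
  congr 1
  · rcases ℓ with _ | ℓ
    · simp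
    · simp [Ncard, slice, add_comm 1]
  · refine sum_congr rfl fun a ha => ?_
    obtain ⟨ha0, hak⟩ : 0 < a ∧ a ≤ k := by simpa using ha
    simp only [Ncard, Int.natAbs_neg, Int.natAbs_natCast, neg_eq_zero, Nat.cast_eq_zero,
      ha0.ne', if_false, zero_add, slice]
    congr 2 <;> ext ν <;> simp only [Set.mem_ofPred_eq]
    all_goals exact and_congr_right fun _ => and_congr_left fun _ => by omega

lemma qPeriodic_slice {q : ℕ} {L : Set (Fin (n + 1) → ℤ)} (hL : qPeriodic q L) (a : ℤ) :
    qPeriodic q (slice L a) := fun μ ν => by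
  have h := hL (Fin.cons a μ) (Fin.cons 0 ν)
  rwa [cons_add_smul_cons, smul_zero, add_zero] at h

lemma slice_add_mul_of_qPeriodic {q : ℕ} {L : Set (Fin (n + 1) → ℤ)} (hL : qPeriodic q L)
    (a t : ℤ) :
    slice L (a + q * t) = slice L a := by
  ext μ
  have h := hL (Fin.cons a μ) (Fin.cons t 0)
  rw [cons_add_smul_cons, smul_zero, add_zero, smul_eq_mul] at h
  exact h.symm

lemma thetaL_eq_zero_of_lt (L : Set (Fin n → ℤ)) {ℓ : ℕ} (hℓ : n < ℓ) :
    thetaL L ℓ = 0 := by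
  ext k
  simp [thetaL, Ncard_eq_zero_of_lt L k hℓ]

lemma thetaL_empty (ℓ : ℕ) : thetaL (∅ : Set (Fin n → ℤ)) ℓ = 0 := by
  ext k
  simp [thetaL, Ncard_empty]

lemma thetaL_eq_slice (L : Set (Fin (n + 1) → ℤ)) (ℓ : ℕ) :
    thetaL L ℓ = (if ℓ = 0 then 0 else thetaL (slice L 0) (ℓ - 1)) +
      sumXPowMul fun a => thetaL (slice L a) ℓ + thetaL (slice L (-a)) ℓ := by
  ext k
  rw [map_add, sumXPowMul, coeff_mk, thetaL, coeff_mk, Ncard_eq_sum_slice, apply_ite (coeff k)]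
  simp [thetaL]

local notation "Y" => (Polynomial.X : Polynomial (PowerSeries ℤ))

def thetaPoly (L : Set (Fin n → ℤ)) : Polynomial (PowerSeries ℤ) :=
  ∑ ℓ ∈ range (n + 1), Polynomial.monomial ℓ (thetaL L ℓ)

lemma coeff_thetaPoly (L : Set (Fin n → ℤ)) (ℓ : ℕ) :
    (thetaPoly L).coeff ℓ = thetaL L ℓ := by
  rw [thetaPoly, Polynomial.finsetSum_coeff, sum_eq_single ℓ]
  · simp
  · intro m _ hm
    simp [Polynomial.coeff_monomial, hm]
  · intro hℓ
    rw [thetaL_eq_zero_of_lt L (by simpa using hℓ)]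
    simp

lemma thetaPoly_empty : thetaPoly (∅ : Set (Fin n → ℤ)) = 0 := by
  simp [thetaPoly, thetaL_empty]

lemma coeff_thetaPoly_eq_slice (L : Set (Fin (n + 1) → ℤ)) (ℓ : ℕ) :
    (thetaPoly L).coeff ℓ = (Y * thetaPoly (slice L 0)).coeff ℓ +
      sumXPowMul fun a => (thetaPoly (slice L a) + thetaPoly (slice L (-a))).coeff ℓ := by
  simp only [coeff_thetaPoly, coeff_X_mul_eq_ite, Polynomial.coeff_add]
  exact thetaL_eq_slice L ℓ

lemma C_mul_thetaPoly_of_qPeriodic {q : ℕ} {L : Set (Fin (n + 1) → ℤ)} (hL : qPeriodic q L) :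
    Polynomial.C (1 - X ^ q) * thetaPoly L =
      Polynomial.C (1 - X ^ q) * (Y * thetaPoly (slice L 0)) +
        ∑ a ∈ Ioc 0 q, Polynomial.C (X ^ a) *
          (thetaPoly (slice L a) + thetaPoly (slice L (-a))) := by
  have hper (a : ℕ) : slice L ((a + q : ℕ) : ℤ) = slice L a ∧
      slice L (-((a + q : ℕ) : ℤ)) = slice L (-a) := by
    constructor
    · simpa using slice_add_mul_of_qPeriodic hL a 1
    · simpa [neg_add, add_comm] using slice_add_mul_of_qPeriodic hL (-a) (-1)
  refine Polynomial.ext fun ℓ => ?_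
  rw [Polynomial.coeff_C_mul, coeff_thetaPoly_eq_slice, mul_add,
    one_sub_X_pow_mul_sumXPowMul fun a => by simp only [(hper a).1, (hper a).2]]
  simp only [Polynomial.coeff_C_mul, Polynomial.coeff_add, Polynomial.finsetSum_coeff]

lemma thetaPoly_eq_of_slice_eq_empty {N : ℕ} {L : Set (Fin (n + 1) → ℤ)}
    (hL : ∀ a : ℕ, N < a → slice L a = ∅ ∧ slice L (-a) = ∅) :
    thetaPoly L = Y * thetaPoly (slice L 0) +
      ∑ a ∈ Ioc 0 N, Polynomial.C (X ^ a) *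
        (thetaPoly (slice L a) + thetaPoly (slice L (-a))) := by
  refine Polynomial.ext fun ℓ => ?_
  rw [coeff_thetaPoly_eq_slice, sumXPowMul_eq_sum_of_eq_zero (N := N) fun a ha => by
    simp [(hL a ha).1, (hL a ha).2, thetaPoly_empty]]
  simp only [Polynomial.coeff_C_mul, Polynomial.coeff_add, Polynomial.finsetSum_coeff]

section Cube

variable {q : ℕ}

def cube (n q : ℕ) : Set (Fin n → ℤ) := {μ | ∀ i, |μ i| < q}

lemma PhiL_eq_thetaL_cube_inter (L : Set (Fin n → ℤ)) (q ℓ : ℕ) :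
    PhiL L q ℓ = thetaL (cube n q ∩ L) ℓ := by
  simp [PhiL, thetaL, NcardRed, Ncard, cube, and_assoc]

lemma slice_cube_inter_of_lt (L : Set (Fin (n + 1) → ℤ)) {a : ℤ} (ha : |a| < q) :
    slice (cube (n + 1) q ∩ L) a = cube n q ∩ slice L a := by
  ext ν
  simp [slice, cube, Fin.forall_fin_succ, ha]

lemma slice_cube_inter_of_le (L : Set (Fin (n + 1) → ℤ)) {a : ℤ} (ha : q ≤ |a|) :
    slice (cube (n + 1) q ∩ L) a = ∅ := by
  ext ν
  simp [slice, cube, Fin.forall_fin_succ, ha.not_gt]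

lemma thetaPoly_cube_inter (hq : 0 < q) (L : Set (Fin (n + 1) → ℤ)) :
    thetaPoly (cube (n + 1) q ∩ L) = Y * thetaPoly (cube n q ∩ slice L 0) +
      ∑ a ∈ Ioc 0 (q - 1), Polynomial.C (X ^ a) *
        (thetaPoly (cube n q ∩ slice L a) + thetaPoly (cube n q ∩ slice L (-a))) := by
  rw [thetaPoly_eq_of_slice_eq_empty (N := q - 1) fun a ha =>
      ⟨slice_cube_inter_of_le L (by simp; omega), slice_cube_inter_of_le L (by simp; omega)⟩,
    slice_cube_inter_of_lt L (by simpa using hq)]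
  refine congrArg _ (sum_congr rfl fun a ha => ?_)
  have ha : a < q := by simp only [mem_Ioc] at ha; omega
  rw [slice_cube_inter_of_lt L (by simpa using ha), slice_cube_inter_of_lt L (by simpa using ha)]

theorem C_pow_mul_thetaPoly (hq : 0 < q) (L : Set (Fin n → ℤ)) (hL : qPeriodic q L) :
    Polynomial.C ((1 - X ^ q) ^ n) * thetaPoly L =
      Polynomial.aeval (Polynomial.C (1 - X ^ q) * Y + Polynomial.C (2 * X ^ q))
        (thetaPoly (cube n q ∩ L)) := by
  induction n with
  | zero =>
    have hcube : cube 0 q ∩ L = L := Set.inter_eq_right.2 fun μ _ i => i.elim0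
    simp [hcube, thetaPoly]
  | succ n ih =>
    obtain ⟨p, rfl⟩ : ∃ p, q = p + 1 := ⟨q - 1, by omega⟩
    set W := Polynomial.C (1 - X ^ (p + 1)) * Y + Polynomial.C (2 * X ^ (p + 1)) with hW
    have hW2 : W = Polynomial.C (1 - X ^ (p + 1)) * Y + 2 * Polynomial.C (X ^ (p + 1)) := by
      rw [hW, map_mul, map_ofNat]
    have hslice_q : slice L ((p + 1 : ℕ) : ℤ) = slice L 0 ∧
        slice L (-((p + 1 : ℕ) : ℤ)) = slice L 0 :=
      ⟨by simpa using slice_add_mul_of_qPeriodic hL 0 1,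
        by simpa using slice_add_mul_of_qPeriodic hL 0 (-1)⟩
    have hzero := ih (slice L 0) (qPeriodic_slice hL 0)
    have hsum : Polynomial.C ((1 - X ^ (p + 1)) ^ n) * ∑ a ∈ Ioc 0 p,
          Polynomial.C (X ^ a) * (thetaPoly (slice L a) + thetaPoly (slice L (-a))) =
        ∑ a ∈ Ioc 0 p, Polynomial.C (X ^ a) *
          (Polynomial.aeval W (thetaPoly (cube n (p + 1) ∩ slice L a)) +
            Polynomial.aeval W (thetaPoly (cube n (p + 1) ∩ slice L (-a)))) := by
      rw [mul_sum]
      refine sum_congr rfl fun a _ => ?_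
      rw [← ih _ (qPeriodic_slice hL _), ← ih _ (qPeriodic_slice hL _)]
      ring
    rw [pow_succ, map_mul, mul_assoc, C_mul_thetaPoly_of_qPeriodic hL, thetaPoly_cube_inter hq,
      sum_Ioc_succ_top (Nat.zero_le p), hslice_q.1, hslice_q.2, Nat.add_sub_cancel]
    simp only [map_add, map_mul, map_sum, Polynomial.aeval_X, Polynomial.aeval_C,
      Polynomial.algebraMap_eq]
    linear_combination
      (Polynomial.C (1 - X ^ (p + 1)) * Y + 2 * Polynomial.C (X ^ (p + 1))) * hzero + hsum -
        Polynomial.aeval W (thetaPoly (cube n (p + 1) ∩ slice L 0)) * hW2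

end Cube

lemma coeff_C_mul_X_add_C_pow {R : Type*} [CommSemiring R] (a b : R) (m ℓ : ℕ) :
    ((Polynomial.C a * Polynomial.X + Polynomial.C b) ^ m).coeff ℓ =
      b ^ (m - ℓ) * m.choose ℓ * a ^ ℓ := by
  rw [show Polynomial.C a * Polynomial.X + Polynomial.C b =
      (Polynomial.X + Polynomial.C b).comp (Polynomial.C a * Polynomial.X) by simp,
    ← Polynomial.pow_comp, Polynomial.comp_C_mul_X_coeff, Polynomial.coeff_X_add_C_pow]

lemma coeff_aeval_thetaPoly (L : Set (Fin n → ℤ)) (a b : PowerSeries ℤ) (ℓ : ℕ) :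
    (Polynomial.aeval (Polynomial.C a * Y + Polynomial.C b) (thetaPoly L)).coeff ℓ =
      (∑ m ∈ range (n + 1), thetaL L m * b ^ (m - ℓ) * m.choose ℓ) * a ^ ℓ := by
  simp only [thetaPoly, map_sum, Polynomial.aeval_monomial, Polynomial.algebraMap_eq,
    Polynomial.coeff_C_mul, Polynomial.finsetSum_coeff, coeff_C_mul_X_add_C_pow, ← mul_assoc,
    sum_mul]

lemma sum_range_mul_pow_choose {R : Type*} [CommSemiring R] (f : ℕ → R) (c : R) (ℓ d : ℕ) :
    ∑ m ∈ range (ℓ + d + 1), f m * c ^ (m - ℓ) * m.choose ℓ =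
      ∑ s ∈ range (d + 1), (ℓ + s).choose s * c ^ s * f (ℓ + s) := by
  rw [add_assoc, sum_range_add, sum_eq_zero fun m hm => by
    rw [Nat.choose_eq_zero_of_lt (mem_range.1 hm), Nat.cast_zero, mul_zero], zero_add]
  refine sum_congr rfl fun s _ => ?_
  rw [Nat.add_sub_cancel_left, Nat.choose_symm_add]
  ring

end LatticeTheta

theorem stmt3_general {n : ℕ} {q : ℕ} (hq : 0 < q) (L : Set (Fin n → ℤ))
    (hL : qPeriodic q L) {ℓ : ℕ} (hℓ : ℓ ≤ n) :
    (1 - (X : PowerSeries ℤ)^q)^(n-ℓ) * thetaL L ℓ =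
      ∑ s ∈ range (n-ℓ+1),
        C (R := ℤ) (2^s * ((ℓ+s).choose s : ℤ)) * (X : PowerSeries ℤ)^(s*q) * PhiL L q (ℓ+s) := by
  have hT : (1 - X ^ q : PowerSeries ℤ) ≠ 0 := fun h => by
    simpa [hq.ne'] using congrArg constantCoeff h
  have h := congrArg (Polynomial.coeff · ℓ) (LatticeTheta.C_pow_mul_thetaPoly hq L hL)
  rw [Polynomial.coeff_C_mul, LatticeTheta.coeff_thetaPoly, LatticeTheta.coeff_aeval_thetaPoly] at h
  obtain ⟨d, rfl⟩ := Nat.exists_eq_add_of_le hℓ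
  refine mul_left_cancel₀ (pow_ne_zero ℓ hT) ?_
  rw [← mul_assoc, ← pow_add, Nat.add_sub_cancel_left, h, mul_comm,
    LatticeTheta.sum_range_mul_pow_choose]
  refine congrArg _ (sum_congr rfl fun s _ => ?_)
  rw [LatticeTheta.PhiL_eq_thetaL_cube_inter]
  simp only [map_mul, map_pow, map_natCast, map_ofNat]
  ring

/-- Theorem 2.5:
`(1-z^q)^{n-ℓ} · ϑ_𝓛^{(ℓ)}(z) = Σ_{s=0}^{n-ℓ} 2^s binom(ℓ+s,s) z^{sq} Φ_𝓛^{(ℓ+s)}(z)`. -/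
theorem stmt3 {n : ℕ} (hn : 1 ≤ n) {q : ℕ} (hq : 0 < q) (L : Set (Fin n → ℤ))
    (hL : qPeriodic q L) {ℓ : ℕ} (hℓ : ℓ ≤ n) :
    (1 - (X : PowerSeries ℤ)^q)^(n-ℓ) * thetaL L ℓ =
      ∑ s ∈ range (n-ℓ+1),
        C (R := ℤ) (2^s * ((ℓ+s).choose s : ℤ)) * (X : PowerSeries ℤ)^(s*q) * PhiL L q (ℓ+s) :=
  stmt3_general hq L hL hℓ
end
end

section
/- Let n ≥ 1, let q be a positive integer, and let 𝓛 ⊆ ℤⁿ be a q-periodic subset. Then for all integers a ≥ 0, 0 ≤ r < q, and 0 ≤ ℓ ≤ n−1: N_𝓛(aq+r, ℓ) = Σ_{s=0}^{n−ℓ} 2ˢ binom(ℓ+s, s) Σ_{t=s}^{a} binom(t−s+n−ℓ−1, n−ℓ−1) N_𝓛^red((a−t)q+r, ℓ+s). -/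
noncomputable section

open Finset PowerSeries

/-!
Every `μ ∈ ℤⁿ` is uniquely `ν + q • d` with `ν = μ.tmod q ∈ C(q)` and `d = μ.tdiv q`
sign-compatible with `ν` (`0 ≤ νᵢ dᵢ`). For such pairs `‖μ‖ = ‖ν‖ + q ‖d‖`, `μᵢ = 0` iff
`νᵢ = dᵢ = 0`, and by periodicity `μ ∈ 𝓛` iff `ν ∈ 𝓛`. Sorting `μ` by `t = ‖d‖` and by the
number `s` of zeros of `ν` at which `d` is nonzero, `N_𝓛(aq+r, ℓ)` counts the `ν ∈ C(q) ∩ 𝓛`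
with `‖ν‖ = (a-t)q + r` and `Z(ν) = ℓ + s`, each weighted by the number of compatible `d`.
That number is `binom(ℓ+s, s)` (which zeros) times `2ˢ` (their signs) times the number of
ways to write `t - s` as a sum over the remaining `n - ℓ` free coordinates.
-/

theorem Int.natAbs_add_of_mul_nonneg {x y : ℤ} (h : 0 ≤ x * y) :
    (x + y).natAbs = x.natAbs + y.natAbs := by
  rcases mul_nonneg_iff.mp h with ⟨hx, hy⟩ | ⟨hx, hy⟩
  · exact Int.natAbs_add_of_nonneg hx hy
  · exact Int.natAbs_add_of_nonpos hx hy

theorem Int.tdiv_tmod_eq_iff {q : ℕ} (hq : 0 < q) {x r d : ℤ} :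
    x.tdiv q = d ∧ x.tmod q = r ↔ r + q * d = x ∧ |r| < q ∧ 0 ≤ r * d := by
  have hq' : (0 : ℤ) < q := by exact_mod_cast hq
  rw [abs_lt]
  rcases le_total 0 x with hx | hx
  · rw [Int.tdiv_tmod_unique hx hq'.ne', Int.natAbs_natCast]
    constructor <;> rintro ⟨rfl, h₁, h₂⟩ <;> refine ⟨rfl, ?_⟩
    · have : 0 ≤ d := by nlinarith
      exact ⟨⟨by omega, h₂⟩, by positivity⟩
    · have : 0 ≤ r := by
        by_contra h
        have : d ≤ 0 := by nlinarith
        nlinarith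
      omega
  · rw [Int.tdiv_tmod_unique' hx hq'.ne', Int.natAbs_natCast]
    constructor <;> rintro ⟨rfl, h₁, h₂⟩ <;> refine ⟨rfl, ?_⟩
    · have : d ≤ 0 := by nlinarith
      exact ⟨⟨h₁, by omega⟩, by nlinarith⟩
    · have : r ≤ 0 := by
        by_contra h
        have : 0 ≤ d := by nlinarith
        nlinarith
      omega

section OneNorm

variable {n : ℕ}

def onenormSphere (n k : ℕ) : Finset (Fin n → ℤ) :=
  {μ ∈ Fintype.piFinset fun _ => Icc (-(k : ℤ)) k | onenorm μ = k}

theorem natAbs_le_onenorm (μ : Fin n → ℤ) (i : Fin n) : (μ i).natAbs ≤ onenorm μ :=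
  single_le_sum (f := fun j => (μ j).natAbs) (fun _ _ => Nat.zero_le _) (mem_univ i)

@[simp]
theorem mem_onenormSphere {k : ℕ} {μ : Fin n → ℤ} : μ ∈ onenormSphere n k ↔ onenorm μ = k := by
  refine ⟨fun h => (mem_filter.mp h).2, fun h => mem_filter.mpr ⟨?_, h⟩⟩
  refine Fintype.mem_piFinset.mpr fun i => mem_Icc.mpr ?_
  have := natAbs_le_onenorm μ i
  omega

theorem card_support_le_onenorm (μ : Fin n → ℤ) : #{i | μ i ≠ 0} ≤ onenorm μ :=
  calc #{i | μ i ≠ 0} ≤ ∑ i with μ i ≠ 0, (μ i).natAbs := by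
        simpa using card_nsmul_le_sum {i | μ i ≠ 0} (fun i => (μ i).natAbs) 1
          fun i hi => Int.natAbs_pos.mpr (mem_filter.mp hi).2
    _ ≤ onenorm μ := sum_le_sum_of_subset (subset_univ _)

theorem onenorm_eq_sum_of_support_subset {μ : Fin n → ℤ} {S : Finset (Fin n)}
    (h : ∀ i, μ i ≠ 0 → i ∈ S) : onenorm μ = ∑ i ∈ S, (μ i).natAbs := by
  refine (sum_subset (subset_univ _) fun i _ hi => ?_).symm
  by_contra hne
  exact hi (h i (Int.natAbs_ne_zero.mp hne))

theorem Ncard_eq_card (L : Set (Fin n → ℤ)) [DecidablePred (· ∈ L)] (k ℓ : ℕ) :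
    Ncard L k ℓ = #{μ ∈ onenormSphere n k | μ ∈ L ∧ zcount μ = ℓ} := by
  rw [Ncard, ← Set.ncard_coe_finset]
  congr 1
  ext μ
  simp [and_left_comm]

theorem NcardRed_eq_card (L : Set (Fin n → ℤ)) [DecidablePred (· ∈ L)] (q k ℓ : ℕ) :
    NcardRed L q k ℓ =
      #{ν ∈ onenormSphere n k | (∀ i, |ν i| < (q : ℤ)) ∧ ν ∈ L ∧ zcount ν = ℓ} := by
  rw [NcardRed, ← Set.ncard_coe_finset]
  congr 1
  ext μ
  simp [and_left_comm]

end OneNorm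

section Decomposition

variable {n q : ℕ}

def truncMod (q : ℕ) (μ : Fin n → ℤ) : Fin n → ℤ := fun i => (μ i).tmod q

def truncDiv (q : ℕ) (μ : Fin n → ℤ) : Fin n → ℤ := fun i => (μ i).tdiv q

theorem truncDiv_truncMod_eq_iff (hq : 0 < q) {μ ν d : Fin n → ℤ} :
    truncDiv q μ = d ∧ truncMod q μ = ν ↔
      ν + (q : ℤ) • d = μ ∧ (∀ i, |ν i| < q) ∧ ∀ i, 0 ≤ ν i * d i := by
  simp only [funext_iff, truncDiv, truncMod, Pi.add_apply, Pi.smul_apply, smul_eq_mul,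
    ← forall_and, Int.tdiv_tmod_eq_iff hq]

variable {ν d : Fin n → ℤ}

theorem natAbs_add_smul_apply (hc : ∀ i, 0 ≤ ν i * d i) (i : Fin n) :
    ((ν + (q : ℤ) • d) i).natAbs = (ν i).natAbs + q * (d i).natAbs := by
  rw [Pi.add_apply, Pi.smul_apply, smul_eq_mul, Int.natAbs_add_of_mul_nonneg (by nlinarith [hc i]),
    Int.natAbs_mul, Int.natAbs_natCast]

theorem onenorm_add_smul (hc : ∀ i, 0 ≤ ν i * d i) :
    onenorm (ν + (q : ℤ) • d) = onenorm ν + q * onenorm d := by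
  simp only [onenorm, natAbs_add_smul_apply hc, sum_add_distrib, mul_sum]

theorem zcount_add_smul (hq : 0 < q) (hc : ∀ i, 0 ≤ ν i * d i) :
    zcount (ν + (q : ℤ) • d) + #{i | ν i = 0 ∧ d i ≠ 0} = zcount ν := by
  have hzero : ∀ i, (ν + (q : ℤ) • d) i = 0 ↔ ν i = 0 ∧ d i = 0 := by
    intro i
    simp only [← Int.natAbs_eq_zero, natAbs_add_smul_apply hc, Nat.add_eq_zero_iff,
      mul_eq_zero, hq.ne', false_or]
  rw [zcount, zcount, filter_congr fun i _ => hzero i, ← filter_filter, ← filter_filter,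
    card_filter_add_card_filter_not]

end Decomposition

section Compositions

variable {ι : Type*} [DecidableEq ι]

theorem card_piAntidiag_nat (S : Finset ι) (t : ℕ) : #(piAntidiag S t) = (#S).multichoose t := by
  rw [← card_finsuppAntidiag_nat_eq_multichoose, finsuppAntidiag, card_map, card_attach]

theorem card_piAntidiag_filter_ne_zero {S T : Finset ι} (hTS : T ⊆ S) {t : ℕ} (ht : #T ≤ t)
    [DecidablePred fun m : ι → ℕ => ∀ i ∈ T, m i ≠ 0] :
    #{m ∈ piAntidiag S t | ∀ i ∈ T, m i ≠ 0} = #(piAntidiag S (t - #T)) := by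
  set e : ι → ℕ := fun i => if i ∈ T then 1 else 0
  have he : ∑ i ∈ S, e i = #T := by
    rw [sum_boole, filter_mem_eq_inter, inter_eq_right.mpr hTS, Nat.cast_id]
  have hle : ∀ m : ι → ℕ, (∀ i ∈ T, m i ≠ 0) → ∀ i, e i ≤ m i := by
    intro m hm i
    by_cases hi : i ∈ T <;> simp [e, hi, Nat.one_le_iff_ne_zero.mpr, hm]
  refine card_nbij' (· - e) (· + e) ?_ ?_ ?_ ?_
  · intro m hm
    simp only [mem_coe, mem_filter, mem_piAntidiag] at hm
    obtain ⟨⟨hsum, hsupp⟩, hT⟩ := hm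
    simp only [mem_coe, mem_piAntidiag, Pi.sub_apply]
    refine ⟨?_, fun i hi => hsupp i (by omega)⟩
    rw [sum_tsub_distrib _ fun i _ => hle m hT i, hsum, he]
  · intro m hm
    simp only [mem_coe, mem_piAntidiag] at hm
    obtain ⟨hsum, hsupp⟩ := hm
    simp only [mem_coe, mem_filter, mem_piAntidiag, Pi.add_apply, sum_add_distrib, hsum,
      he, Nat.sub_add_cancel ht, true_and]
    refine ⟨fun i hi => ?_, fun i hi => by simp [e, hi]⟩
    by_cases hiT : i ∈ T
    · exact hTS hiT
    · exact hsupp i (by simpa [e, hiT] using hi)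
  · intro m hm
    simp only [mem_coe, mem_filter] at hm
    funext i
    simp only [Pi.add_apply, Pi.sub_apply, Nat.sub_add_cancel (hle m hm.2 i)]
  · intro m _
    funext i
    simp

end Compositions

section CompatSphere

variable {n : ℕ}

def signChoice (ν : Fin n → ℤ) (P : Finset (Fin n)) (i : Fin n) : ℤ :=
  if ν i = 0 then (if i ∈ P then 1 else -1) else (ν i).sign

variable {ν : Fin n → ℤ} {P : Finset (Fin n)} {i : Fin n}

theorem natAbs_signChoice : (signChoice ν P i).natAbs = 1 := by
  by_cases hν : ν i = 0
  · by_cases hP : i ∈ P <;> simp [signChoice, hν, hP]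
  · simp [signChoice, hν, Int.natAbs_sign_of_ne_zero hν]

theorem mul_signChoice_nonneg : 0 ≤ ν i * signChoice ν P i := by
  by_cases hν : ν i = 0
  · simp [hν]
  · simp only [signChoice, hν, if_false, Int.mul_sign_self]
    positivity

theorem signChoice_mul_pos_iff (hν : ν i = 0) {m : ℤ} (hm : 0 < m) :
    0 < signChoice ν P i * m ↔ i ∈ P := by
  by_cases hP : i ∈ P <;> simp [signChoice, hν, hP, hm, hm.le]

theorem signChoice_mul_natAbs {x : ℤ} (hc : 0 ≤ ν i * x)
    (hP : ν i = 0 → x ≠ 0 → (i ∈ P ↔ 0 < x)) :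
    signChoice ν P i * x.natAbs = x := by
  rcases lt_trichotomy (ν i) 0 with hν | hν | hν
  · have : x ≤ 0 := by nlinarith
    simp only [signChoice, hν.ne, if_false, Int.sign_eq_neg_one_of_neg hν]
    omega
  · by_cases hx : x = 0
    · simp [hx]
    by_cases hpos : 0 < x
    · simp only [signChoice, hν, if_true, (hP hν hx).mpr hpos]
      omega
    · simp only [signChoice, hν, if_true, mt (hP hν hx).mp hpos, if_false]
      omega
  · have : 0 ≤ x := by nlinarith
    simp only [signChoice, hν.ne', if_false, Int.sign_eq_one_of_pos hν]
    omega

def compatSphere (ν : Fin n → ℤ) (t s : ℕ) : Finset (Fin n → ℤ) :=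
  {d ∈ onenormSphere n t | (∀ i, 0 ≤ ν i * d i) ∧ #{i | ν i = 0 ∧ d i ≠ 0} = s}

@[simp]
theorem mem_compatSphere {ν d : Fin n → ℤ} {t s : ℕ} :
    d ∈ compatSphere ν t s ↔
      onenorm d = t ∧ (∀ i, 0 ≤ ν i * d i) ∧ #{i | ν i = 0 ∧ d i ≠ 0} = s := by
  simp [compatSphere]

theorem card_compatSphere_filter_eq {ν : Fin n → ℤ} {T : Finset (Fin n)}
    (hT : T ⊆ ({i | ν i = 0} : Finset _)) (t : ℕ) :
    #{d ∈ compatSphere ν t #T | ({i | ν i = 0 ∧ d i ≠ 0} : Finset _) = T} =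
      2 ^ #T * #{m ∈ piAntidiag (({i | ν i ≠ 0} : Finset _) ∪ T) t | ∀ i ∈ T, m i ≠ 0} := by
  have hTz : ∀ i ∈ T, ν i = 0 := fun i hi => (mem_filter.mp (hT hi)).2
  rw [← card_powerset, ← card_product]
  refine card_nbij' (fun d => ({i ∈ T | 0 < d i}, fun i => (d i).natAbs))
    (fun p i => signChoice ν p.1 i * p.2 i) ?_ ?_ ?_ ?_
  · intro d hd
    rw [mem_coe, mem_filter, mem_compatSphere] at hd
    obtain ⟨⟨hnorm, -, -⟩, hfib⟩ := hd
    have hsupp : ∀ i, d i ≠ 0 → i ∈ ({i | ν i ≠ 0} : Finset _) ∪ T := by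
      intro i hi
      by_cases hν : ν i = 0
      · exact mem_union_right _ (hfib ▸ mem_filter.mpr ⟨mem_univ _, hν, hi⟩)
      · exact mem_union_left _ (by simp [hν])
    simp only [mem_coe, mem_product, mem_powerset, filter_subset, true_and, mem_filter,
      mem_piAntidiag]
    refine ⟨⟨?_, fun i hi => hsupp i (Int.natAbs_ne_zero.mp hi)⟩, fun i hi => ?_⟩
    · rw [← hnorm, onenorm_eq_sum_of_support_subset hsupp]
    · rw [← hfib] at hi
      exact Int.natAbs_ne_zero.mpr (mem_filter.mp hi).2.2
  · rintro ⟨P, m⟩ hp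
    simp only [mem_coe, mem_product, mem_powerset, mem_filter, mem_piAntidiag] at hp
    obtain ⟨hPT, ⟨hsum, hsupp⟩, hT0⟩ := hp
    have hfib : ({i | ν i = 0 ∧ signChoice ν P i * m i ≠ 0} : Finset _) = T := by
      ext i
      simp only [mem_filter, mem_univ, true_and, ← Int.natAbs_ne_zero, Int.natAbs_mul,
        natAbs_signChoice, one_mul, Int.natAbs_natCast]
      constructor
      · rintro ⟨hν, hm⟩
        simpa [hν] using hsupp i hm
      · exact fun hi => ⟨hTz i hi, hT0 i hi⟩
    rw [mem_coe, mem_filter, mem_compatSphere, hfib]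
    refine ⟨⟨?_, fun i => ?_, rfl⟩, rfl⟩
    · rw [onenorm_eq_sum_of_support_subset fun i hi => hsupp i (by rintro h; simp [h] at hi)]
      simp only [Int.natAbs_mul, natAbs_signChoice, one_mul, Int.natAbs_natCast, hsum]
    · rw [← mul_assoc]
      exact mul_nonneg mul_signChoice_nonneg (Int.natCast_nonneg _)
  · intro d hd
    rw [mem_coe, mem_filter, mem_compatSphere] at hd
    obtain ⟨⟨-, hc, -⟩, hfib⟩ := hd
    refine funext fun i => signChoice_mul_natAbs (hc i) fun hν hd => ?_
    have hiT : i ∈ T := hfib ▸ mem_filter.mpr ⟨mem_univ _, hν, hd⟩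
    simp [hiT]
  · rintro ⟨P, m⟩ hp
    simp only [mem_coe, mem_product, mem_powerset, mem_filter, mem_piAntidiag] at hp
    obtain ⟨hPT, -, hT0⟩ := hp
    refine Prod.ext ?_ (funext fun i => by simp [Int.natAbs_mul, natAbs_signChoice])
    ext i
    rw [mem_filter]
    by_cases hiT : i ∈ T
    · rw [and_iff_right hiT]
      exact signChoice_mul_pos_iff (hTz i hiT) (by exact_mod_cast Nat.pos_of_ne_zero (hT0 i hiT))
    · exact iff_of_false (fun h => hiT h.1) (fun h => hiT (hPT h))

theorem card_compatSphere (ν : Fin n → ℤ) {t s : ℕ} (hst : s ≤ t) :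
    #(compatSphere ν t s) =
      2 ^ s * (zcount ν).choose s * (n - zcount ν + s).multichoose (t - s) := by
  have hfib : ∀ d ∈ compatSphere ν t s,
      ({i | ν i = 0 ∧ d i ≠ 0} : Finset _) ∈ powersetCard s {i | ν i = 0} := by
    intro d hd
    rw [mem_compatSphere] at hd
    exact mem_powersetCard.mpr
      ⟨fun i hi => mem_filter.mpr ⟨mem_univ _, (mem_filter.mp hi).2.1⟩, hd.2.2⟩
  have hnz : #({i | ν i ≠ 0} : Finset (Fin n)) + zcount ν = n :=
    (add_comm _ _).trans ((card_filter_add_card_filter_not _).trans (card_fin n))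
  have hconst : ∀ T ∈ powersetCard s ({i | ν i = 0} : Finset (Fin n)),
      #{d ∈ compatSphere ν t s | ({i | ν i = 0 ∧ d i ≠ 0} : Finset _) = T} =
        2 ^ s * (n - zcount ν + s).multichoose (t - s) := by
    intro T hT
    obtain ⟨hTz, rfl⟩ := mem_powersetCard.mp hT
    have hdisj : Disjoint ({i | ν i ≠ 0} : Finset _) T :=
      disjoint_left.mpr fun i hi hiT => (mem_filter.mp hi).2 (mem_filter.mp (hTz hiT)).2
    rw [card_compatSphere_filter_eq hTz,
      card_piAntidiag_filter_ne_zero (S := ({i | ν i ≠ 0} : Finset _) ∪ T) subset_union_right hst,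
      card_piAntidiag_nat, card_union_of_disjoint hdisj, Nat.eq_sub_of_add_eq hnz]
  rw [card_eq_sum_card_fiberwise hfib, sum_congr rfl hconst, sum_const, card_powersetCard,
    smul_eq_mul, zcount]
  ring

end CompatSphere

theorem add_mul_eq_mul_add_iff_of_lt {a k q r t : ℕ} (hr : r < q) :
    k + q * t = a * q + r ↔ t ≤ a ∧ k = (a - t) * q + r := by
  have hsplit : t ≤ a → (a - t) * q + q * t = a * q := fun hta => by
    rw [mul_comm q, ← add_mul, Nat.sub_add_cancel hta]
  constructor
  · intro h
    have hta : t ≤ a := by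
      have : q * t < q * (a + 1) := by rw [mul_add, mul_comm q a]; omega
      exact Nat.lt_succ_iff.mp (Nat.lt_of_mul_lt_mul_left this)
    have := hsplit hta
    exact ⟨hta, by omega⟩
  · rintro ⟨hta, rfl⟩
    have := hsplit hta
    omega

section Periodic

variable {n q : ℕ} {L : Set (Fin n → ℤ)} [DecidablePred (· ∈ L)]

theorem card_eq_sum_card_compatSphere (hL : qPeriodic q L) {a r : ℕ} (hr : r < q) (ℓ : ℕ) :
    #{μ ∈ onenormSphere n (a * q + r) | μ ∈ L ∧ zcount μ = ℓ} =
      ∑ s ∈ range (n - ℓ + 1), ∑ t ∈ Icc s a,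
        ∑ ν ∈ {ν ∈ onenormSphere n ((a - t) * q + r) |
            (∀ i, |ν i| < (q : ℤ)) ∧ ν ∈ L ∧ zcount ν = ℓ + s},
          #(compatSphere ν t s) := by
  have hq : 0 < q := by omega
  simp only [← card_sigma]
  refine card_nbij'
    (fun μ => ⟨zcount (truncMod q μ) - ℓ, onenorm (truncDiv q μ), truncMod q μ, truncDiv q μ⟩)
    (fun x => x.2.2.1 + (q : ℤ) • x.2.2.2) ?_ ?_ ?_ ?_
  · intro μ hμ
    rw [mem_coe, mem_filter, mem_onenormSphere] at hμ
    obtain ⟨hnorm, hμL, hz⟩ := hμ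
    obtain ⟨hμ, hlt, hc⟩ := (truncDiv_truncMod_eq_iff (μ := μ) hq).mp ⟨rfl, rfl⟩
    simp only [mem_coe, mem_sigma, mem_range, mem_Icc, mem_filter, mem_onenormSphere,
      mem_compatSphere]
    generalize truncMod q μ = ν at *
    generalize truncDiv q μ = d at *
    subst hμ
    have hz' := zcount_add_smul hq hc
    obtain ⟨hta, hνnorm⟩ := (add_mul_eq_mul_add_iff_of_lt hr).mp (onenorm_add_smul hc ▸ hnorm)
    have hs : #{i | ν i = 0 ∧ d i ≠ 0} ≤ onenorm d :=
      (card_le_card fun i hi => by simp only [mem_filter] at hi ⊢; exact ⟨hi.1, hi.2.2⟩).trans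
        (card_support_le_onenorm d)
    have hzn : zcount ν ≤ n := (card_filter_le _ _).trans (card_fin n).le
    exact ⟨by omega, ⟨by omega, hta⟩, ⟨hνnorm, hlt, (hL ν d).mpr hμL, by omega⟩, trivial, hc,
      by omega⟩
  · rintro ⟨s, t, ν, d⟩ hx
    simp only [mem_coe, mem_sigma, mem_range, mem_Icc, mem_filter, mem_onenormSphere,
      mem_compatSphere] at hx
    obtain ⟨-, ⟨-, hta⟩, ⟨hνnorm, -, hνL, hνz⟩, hdnorm, hc, hds⟩ := hx
    have := zcount_add_smul hq hc
    simp only [mem_coe, mem_filter, mem_onenormSphere, onenorm_add_smul hc, hdnorm,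
      add_mul_eq_mul_add_iff_of_lt hr]
    exact ⟨⟨hta, hνnorm⟩, (hL ν d).mp hνL, by omega⟩
  · intro μ _
    exact ((truncDiv_truncMod_eq_iff hq).mp ⟨rfl, rfl⟩).1
  · rintro ⟨s, t, ν, d⟩ hx
    simp only [mem_coe, mem_sigma, mem_range, mem_Icc, mem_filter, mem_onenormSphere,
      mem_compatSphere] at hx
    obtain ⟨-, -, ⟨-, hlt, -, hνz⟩, hdnorm, hc, -⟩ := hx
    obtain ⟨hd, hν⟩ := (truncDiv_truncMod_eq_iff hq).mpr ⟨rfl, hlt, hc⟩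
    simp only [hd, hν, hνz, hdnorm, Nat.add_sub_cancel_left]

end Periodic

theorem Nat.succ_multichoose_eq_choose (m k : ℕ) : (m + 1).multichoose k = (k + m).choose m := by
  rw [Nat.multichoose_eq, add_right_comm, Nat.add_sub_cancel, add_comm, Nat.choose_symm_add]

theorem stmt6_general {n : ℕ} (hn : 1 ≤ n) {q : ℕ} (L : Set (Fin n → ℤ))
    (hL : qPeriodic q L) (a r ℓ : ℕ) (hr : r < q) (hℓ : ℓ ≤ n - 1) :
    Ncard L (a*q + r) ℓ =
      ∑ s ∈ range (n-ℓ+1), 2^s * (ℓ+s).choose s *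
        ∑ t ∈ Icc s a, (t - s + n - ℓ - 1).choose (n - ℓ - 1) *
          NcardRed L q ((a-t)*q + r) (ℓ+s) := by
  classical
  rw [Ncard_eq_card, card_eq_sum_card_compatSphere hL hr]
  refine sum_congr rfl fun s hs => ?_
  have hsℓ := mem_range.mp hs
  rw [mul_sum]
  refine sum_congr rfl fun t ht => ?_
  have hcard : ∀ ν ∈ ({ν ∈ onenormSphere n ((a - t) * q + r) |
      (∀ i, |ν i| < (q : ℤ)) ∧ ν ∈ L ∧ zcount ν = ℓ + s} : Finset _),
      #(compatSphere ν t s) =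
        2 ^ s * (ℓ + s).choose s * (t - s + n - ℓ - 1).choose (n - ℓ - 1) := by
    intro ν hν
    rw [card_compatSphere ν (mem_Icc.mp ht).1, (mem_filter.mp hν).2.2.2,
      show n - (ℓ + s) + s = n - ℓ - 1 + 1 by omega, Nat.succ_multichoose_eq_choose,
      show t - s + (n - ℓ - 1) = t - s + n - ℓ - 1 by omega]
  rw [sum_congr rfl hcard, sum_const, smul_eq_mul, NcardRed_eq_card]
  ring

/-- formula (3.13):
`N_𝓛(aq+r, ℓ) = Σ_{s=0}^{n-ℓ} 2^s binom(ℓ+s,s) Σ_{t=s}^{a}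
  binom(t-s+n-ℓ-1, n-ℓ-1) N_𝓛^red((a-t)q+r, ℓ+s)`. -/
theorem stmt6 {n : ℕ} (hn : 1 ≤ n) {q : ℕ} (hq : 0 < q) (L : Set (Fin n → ℤ))
    (hL : qPeriodic q L) (a r ℓ : ℕ) (hr : r < q) (hℓ : ℓ ≤ n - 1) :
    Ncard L (a*q + r) ℓ =
      ∑ s ∈ range (n-ℓ+1), 2^s * (ℓ+s).choose s *
        ∑ t ∈ Icc s a, (t - s + n - ℓ - 1).choose (n - ℓ - 1) *
          NcardRed L q ((a-t)*q + r) (ℓ+s) :=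
  stmt6_general hn L hL a r ℓ hr hℓ
end
end

section
/- Let n ≥ 2, let 𝓛 be any subset of ℤⁿ, let 1 ≤ p ≤ n and 0 ≤ ℓ ≤ n. Then B̃_{𝓛,p}^{(ℓ)}(z) = Σ_{g=0}^{p−1} z^{2g} · Υ_{p−1−2g}^{(ℓ)}(z) · C_{p,g}^{(ℓ)}. (This is Claim 3.6 in the proof of Theorem 2.2, multiplied through by zᵖ.) -/
noncomputable section

open Finset PowerSeries

/-
Substituting `g = p - j - t + i - α` turns `z^{2p-2(j+t+α-i)} Υ_{2(j+t+α-i)-p-1}` into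
`z^{2g} Υ_{p-1-2g}` and `binom(β, α)` into `binom(β, p+i-j-t-g)`; the range `0 ≤ α ≤ β` becomes a
range of `g` inside `[0, p)`, and the binomial coefficient vanishes on the rest of `[0, p)`.
Exchanging the sum over `g` with the sums over `j, t, β, i` leaves exactly `C_{p,g}^{(ℓ)}`.
-/

lemma ibinom_eq_zero {b a : ℤ} (h : a < 0 ∨ b < a) : ibinom b a = 0 :=
  if_pos h

section OuterSum

variable {R : Type*} [CommRing R]

/-- The weighted sum over `j, t, β` shared by `B̃_{𝓛,p}^{(ℓ)}` and `C_{p,g}^{(ℓ)}`. -/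
def outerSum (n p ℓ : ℕ) (f : ℕ → ℕ → ℕ → R) : R :=
  ∑ j ∈ Icc 1 p, (-1 : R)^(j-1) *
    ∑ t ∈ range ((p-j)/2 + 1), (ibinom ((n : ℤ) - p + j + 2*t) t : R) *
      ∑ β ∈ range (p-j-2*t+1),
        ((2^(p-j-2*t-β) * ibinom ((n : ℤ) - ℓ) β * ibinom (ℓ : ℤ) ((p-j-2*t-β : ℕ)) : ℤ) :
          R) * f j t β

variable {n p ℓ : ℕ}

lemma outerSum_congr {f f' : ℕ → ℕ → ℕ → R}
    (h : ∀ j t β, β + 2*t + j ≤ p → f j t β = f' j t β) :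
    outerSum n p ℓ f = outerSum n p ℓ f' := by
  refine sum_congr rfl fun j hj => congrArg _ <| sum_congr rfl fun t ht => congrArg _ <|
    sum_congr rfl fun β hβ => congrArg _ <| h j t β ?_
  simp only [mem_Icc, mem_range] at hj ht hβ; omega

lemma outerSum_sum {ι : Type*} (s : Finset ι) (f : ι → ℕ → ℕ → ℕ → R) :
    outerSum n p ℓ (fun j t β => ∑ g ∈ s, f g j t β) =
      ∑ g ∈ s, outerSum n p ℓ (f g) := by
  simp only [outerSum, mul_sum]
  rw [sum_comm]
  refine sum_congr rfl fun j _ => ?_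
  rw [sum_comm]
  exact sum_congr rfl fun t _ => sum_comm

lemma outerSum_mul_const (f : ℕ → ℕ → ℕ → R) (c : R) :
    outerSum n p ℓ (fun j t β => f j t β * c) = outerSum n p ℓ f * c := by
  simp only [outerSum, sum_mul, mul_assoc]

lemma map_outerSum {S : Type*} [CommRing S] (φ : R →+* S) (f : ℕ → ℕ → ℕ → R) :
    φ (outerSum n p ℓ f) = outerSum n p ℓ (fun j t β => φ (f j t β)) := by
  simp only [outerSum, map_sum, map_mul, map_pow, map_neg, map_one, map_intCast]

end OuterSum

lemma sum_range_ibinom_zsmul_sub {M : Type*} [AddCommGroup M] (F : ℕ → M)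
    {β c m : ℕ} (hβc : β ≤ c) (hcm : c < m) :
    ∑ α ∈ range (β+1), ibinom β α • F (c - α) =
      ∑ g ∈ range m, ibinom β ((c : ℤ) - g) • F g := by
  have hsub : (range (β+1)).image (c - ·) ⊆ range m := by
    intro g hg
    simp only [mem_image, mem_range] at hg ⊢
    omega
  have hvanish : ∀ g ∈ range m, g ∉ (range (β+1)).image (c - ·) →
      ibinom β ((c : ℤ) - g) • F g = 0 := by
    intro g _ hg
    simp only [mem_image, mem_range, not_exists, not_and] at hg
    rw [ibinom_eq_zero (by have := hg (c - g); omega), zero_smul]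
  rw [← sum_subset hsub hvanish, sum_image fun a ha b hb _ => by
    simp only [coe_range, Set.mem_Iio] at ha hb; omega]
  refine sum_congr rfl fun α hα => ?_
  rw [mem_range] at hα
  congr 2
  omega

lemma sum_ibinom_mul_sum_X_pow_mul_Upsilon {n : ℕ} (L : Set (Fin n → ℤ)) {p ℓ j t β : ℕ}
    (hβ : β + 2*t + j ≤ p) :
    ∑ α ∈ range (β+1), (ibinom β α : PowerSeries ℤ) *
        ∑ i ∈ range j, (X : PowerSeries ℤ)^(2*p - 2*(j+t+α-i)) *
          Upsilon L (2*((j : ℤ) + t + α - i) - p - 1) ℓ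
      = ∑ g ∈ range p,
          ((∑ i ∈ range j, ibinom β ((p : ℤ) + i - j - t - g) : ℤ) : PowerSeries ℤ) *
          ((X : PowerSeries ℤ)^(2*g) * Upsilon L ((p : ℤ) - 1 - 2*g) ℓ) := by
  set F : ℕ → PowerSeries ℤ := fun g => X^(2*g) * Upsilon L ((p : ℤ) - 1 - 2*g) ℓ
  calc _ = ∑ i ∈ range j, ∑ α ∈ range (β+1), ibinom β α • F (p - j - t + i - α) := by
        rw [sum_comm]
        refine sum_congr rfl fun α hα => ?_
        rw [mul_sum]
        refine sum_congr rfl fun i hi => ?_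
        simp only [mem_range] at hα hi
        have hexp : 2*p - 2*(j+t+α-i) = 2*(p - j - t + i - α) := by omega
        have harg : 2*((j : ℤ) + t + α - i) - p - 1 =
            p - 1 - 2*((p - j - t + i - α : ℕ) : ℤ) := by omega
        rw [zsmul_eq_mul, hexp, harg]
    _ = ∑ i ∈ range j, ∑ g ∈ range p,
          ibinom β (((p - j - t + i : ℕ) : ℤ) - g) • F g :=
        sum_congr rfl fun i hi =>
          sum_range_ibinom_zsmul_sub F (by omega) (by simp only [mem_range] at hi; omega)
    _ = _ := by
        rw [sum_comm]
        refine sum_congr rfl fun g _ => ?_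
        rw [Int.cast_sum, sum_mul]
        refine sum_congr rfl fun i hi => ?_
        simp only [mem_range] at hi
        rw [zsmul_eq_mul]
        congr 3
        omega

lemma Btilde_eq_outerSum {n : ℕ} (L : Set (Fin n → ℤ)) (p ℓ : ℕ) :
    Btilde L p ℓ = outerSum n p ℓ fun j t β =>
      ∑ α ∈ range (β+1), (ibinom β α : PowerSeries ℤ) *
        ∑ i ∈ range j, (X : PowerSeries ℤ)^(2*p - 2*(j+t+α-i)) *
          Upsilon L (2*((j : ℤ) + t + α - i) - p - 1) ℓ := by
  simp only [Btilde, outerSum, eq_intCast, Int.cast_pow, Int.cast_neg, Int.cast_one]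

lemma Cpg_eq_outerSum (n p g ℓ : ℕ) :
    Cpg n p g ℓ =
      outerSum n p ℓ fun j t β => ∑ i ∈ range j, ibinom β ((p : ℤ) + i - j - t - g) := by
  simp only [Cpg, outerSum, Int.cast_id]

theorem stmt8_general {n : ℕ} (L : Set (Fin n → ℤ)) {p ℓ : ℕ} :
    Btilde L p ℓ =
      ∑ g ∈ range p,
        (X : PowerSeries ℤ)^(2*g) * Upsilon L ((p : ℤ) - 1 - 2*g) ℓ * C (R := ℤ) (Cpg n p g ℓ) := by
  rw [Btilde_eq_outerSum,
    outerSum_congr fun j t β hβ => sum_ibinom_mul_sum_X_pow_mul_Upsilon L hβ, outerSum_sum]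
  refine sum_congr rfl fun g _ => ?_
  rw [outerSum_mul_const, mul_comm, eq_intCast, Cpg_eq_outerSum,
    ← eq_intCast (Int.castRingHom _), map_outerSum]
  simp only [eq_intCast]

/-- Claim 3.6:
`B̃_{𝓛,p}^{(ℓ)}(z) = Σ_{g=0}^{p-1} z^{2g} Υ_{p-1-2g}^{(ℓ)}(z) C_{p,g}^{(ℓ)}`. -/
theorem stmt8 {n : ℕ} (hn : 2 ≤ n) (L : Set (Fin n → ℤ)) {p ℓ : ℕ}
    (hp1 : 1 ≤ p) (hpn : p ≤ n) (hℓ : ℓ ≤ n) :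
    Btilde L p ℓ =
      ∑ g ∈ range p,
        (X : PowerSeries ℤ)^(2*g) * Upsilon L ((p : ℤ) - 1 - 2*g) ℓ * C (R := ℤ) (Cpg n p g ℓ) :=
  stmt8_general L
end
end

section
/- Let n ≥ 2 and 1 ≤ p ≤ n. Then C_{p,0}^{(n)} = (−1)^{p−1}. (This is the base case of the induction in the proof of Claim 3.8.) -/
noncomputable section

open Finset PowerSeries

/-!
For `ℓ = n` the factor `binom(n - ℓ, β) = binom(0, β)` kills every `β > 0`, and for `β = 0`
the innermost factor `binom(0, p + i - j - t)` survives only when `p + i = j + t`. Since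
`i < j` and `2t ≤ p - j`, this forces `j = p`, `t = 0`, `i = 0`, so the whole sum collapses
to its single term `(-1)^(p-1)`.
-/

lemma ibinom_zero_left_of_ne {a : ℤ} (ha : a ≠ 0) : ibinom 0 a = 0 := by
  rcases ha.lt_or_gt with h | h <;> simp [ibinom, h]

lemma ibinom_zero_zero : ibinom 0 0 = 1 := by
  simp [ibinom]

lemma ibinom_natCast_zero (b : ℕ) : ibinom b 0 = 1 := by
  simp [ibinom]

def CpgSummand (n p g ℓ j : ℕ) : ℤ :=
  ∑ t ∈ range ((p-j)/2 + 1), ibinom ((n : ℤ) - p + j + 2*t) t *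
    ∑ β ∈ range (p-j-2*t+1),
      2^(p-j-2*t-β) * ibinom ((n : ℤ) - ℓ) β * ibinom (ℓ : ℤ) ((p-j-2*t-β : ℕ)) *
      ∑ i ∈ range j, ibinom (β : ℤ) ((p : ℤ) + i - j - t - g)

lemma Cpg_eq_sum_CpgSummand (n p g ℓ : ℕ) :
    Cpg n p g ℓ = ∑ j ∈ Icc 1 p, (-1 : ℤ)^(j-1) * CpgSummand n p g ℓ j :=
  rfl

lemma CpgSummand_zero_self_of_lt {n p j : ℕ} (hjp : j < p) : CpgSummand n p 0 n j = 0 := by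
  refine sum_eq_zero fun t ht => ?_
  have htj : t + j < p := by rw [mem_range] at ht; omega
  refine mul_eq_zero_of_right _ (sum_eq_zero fun β _ => ?_)
  rcases Nat.eq_zero_or_pos β with rfl | hβ
  · refine mul_eq_zero_of_right _ (sum_eq_zero fun i _ => ibinom_zero_left_of_ne ?_)
    omega
  · rw [sub_self, ibinom_zero_left_of_ne (by exact_mod_cast hβ.ne'), mul_zero, zero_mul, zero_mul]

lemma sum_range_ibinom_zero_left {m : ℕ} (hm : 0 < m) : ∑ i ∈ range m, ibinom 0 i = 1 := by
  rw [sum_eq_single_of_mem 0 (mem_range.mpr hm) fun i _ hi => ibinom_zero_left_of_ne (by omega)]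
  exact ibinom_zero_zero

lemma CpgSummand_zero_self_self {n p : ℕ} (hp : 0 < p) : CpgSummand n p 0 n p = 1 := by
  simp only [CpgSummand, Nat.sub_self, Nat.zero_div, zero_add, mul_zero, sum_range_one,
    Nat.cast_zero, add_zero, sub_zero, sub_add_cancel, sub_self, add_sub_cancel_left, pow_zero,
    ibinom_natCast_zero, ibinom_zero_zero, one_mul]
  exact sum_range_ibinom_zero_left hp

theorem stmt12_general {n p : ℕ} (hp1 : 1 ≤ p) :
    Cpg n p 0 n = (-1 : ℤ)^(p-1) := by
  rw [Cpg_eq_sum_CpgSummand, sum_eq_single_of_mem p (mem_Icc.mpr ⟨hp1, le_rfl⟩),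
    CpgSummand_zero_self_self hp1, mul_one]
  intro j hj hjp
  rw [CpgSummand_zero_self_of_lt (lt_of_le_of_ne (mem_Icc.mp hj).2 hjp), mul_zero]

/-- base case of Claim 3.8: `C_{p,0}^{(n)} = (-1)^{p-1}`. -/
theorem stmt12 {n p : ℕ} (hn : 2 ≤ n) (hp1 : 1 ≤ p) (hpn : p ≤ n) :
    Cpg n p 0 n = (-1 : ℤ)^(p-1) :=
  stmt12_general hp1
end
end
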